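/- arXiv:1305.1062 — 3 statements merged into one kernel-verified Lean document; each statement's English description precedes it below -/
import Mathlib

section
/- If A is an n × n integer matrix with nonzero determinant, then the direct limit of the system ℤ^n → ℤ^n → ℤ^n → ⋯ with all maps equal to A is isomorphic to the subgroup ⋃_{k∈ℕ} A^{−k} ℤ^n of (ℤ[1/det A])^n. -/
/-!
Over `ℚ` the matrix `A` becomes invertible, and the cast `c : ℤⁿ → ℚⁿ` intertwines `A` on `ℤⁿ`
with this automorphism `T` of `ℚⁿ`. Hence the injective maps `T⁻ᵏ ∘ c` on the `k`-th copy of `ℤⁿ`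
are compatible with the transition maps, so they induce an injective map out of the direct limit,
whose image is spanned by the `x` with `Tᵏx ∈ c(ℤⁿ)` for some `k`.
-/

open Function Submodule

namespace Module.DirectLimit

variable {R M N : Type*} [Semiring R] [AddCommMonoid M] [Module R M] [AddCommMonoid N] [Module R N]
  {f : M →ₗ[R] M} {c : M →ₗ[R] N} {T : N ≃ₗ[R] N}

def symmPowComp (T : N ≃ₗ[R] N) (c : M →ₗ[R] N) (k : ℕ) : M →ₗ[R] N :=
  ((T ^ k).symm : N →ₗ[R] N) ∘ₗ c

theorem symmPowComp_apply (k : ℕ) (x : M) : symmPowComp T c k x = (T ^ k).symm (c x) := rfl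

theorem pow_apply_of_semiconj (hc : Semiconj c f T) (m : ℕ) (x : M) :
    c ((f ^ m) x) = (T ^ m) (c x) := by
  simpa only [Module.End.pow_apply, LinearEquiv.pow_apply] using hc.iterate_right m x

theorem symmPowComp_pow_sub (hc : Semiconj c f T) {i j : ℕ} (hij : i ≤ j) (x : M) :
    symmPowComp T c j ((f ^ (j - i)) x) = symmPowComp T c i x := by
  rw [symmPowComp_apply, symmPowComp_apply, pow_apply_of_semiconj hc, LinearEquiv.symm_apply_eq,
    ← pow_sub_mul_pow T hij, LinearEquiv.mul_apply, LinearEquiv.apply_symm_apply]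

theorem symmPowComp_injective (hc : Function.Injective c) (k : ℕ) :
    Function.Injective (symmPowComp T c k) :=
  (T ^ k).symm.injective.comp hc

theorem range_lift_symmPowComp (hc : Semiconj c f T) :
    LinearMap.range (lift R ℕ (fun _ => M) (fun i j _ => f ^ (j - i)) (symmPowComp T c)
      fun _ _ hij => symmPowComp_pow_sub hc hij) =
      span R {x | ∃ (k : ℕ) (y : M), (T ^ k) x = c y} := by
  apply le_antisymm
  · rintro _ ⟨z, rfl⟩
    induction z using DirectLimit.induction_on with
    | ih k y => exact subset_span ⟨k, y, by simp [symmPowComp_apply]⟩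
  · rw [span_le]
    rintro x ⟨k, y, hxy⟩
    exact ⟨of R ℕ _ _ k y, by simp [symmPowComp_apply, ← hxy]⟩

theorem nonempty_linearEquiv_span_of_semiconj (hc : Semiconj c f T)
    (hc_inj : Function.Injective c) :
    Nonempty (DirectLimit (fun _ : ℕ => M) (fun i j _ => f ^ (j - i)) ≃ₗ[R]
      span R {x | ∃ (k : ℕ) (y : M), (T ^ k) x = c y}) :=
  ⟨(LinearEquiv.ofInjective _ (lift_injective _ _ (symmPowComp_injective hc_inj))).trans
    (LinearEquiv.ofEq _ _ (range_lift_symmPowComp hc))⟩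

end Module.DirectLimit

namespace Matrix

variable {ι : Type*} [Fintype ι] [DecidableEq ι]

theorem pow_mulVec_eq_iterate {S : Type*} [Semiring S] (B : Matrix ι ι S) (k : ℕ) (x : ι → S) :
    (B ^ k) *ᵥ x = (B *ᵥ ·)^[k] x := by
  induction k with
  | zero => simp
  | succ k ih => rw [pow_succ', ← mulVec_mulVec, ih, iterate_succ_apply']

theorem nonempty_directLimit_mulVecLin_linearEquiv {R K : Type*} [CommRing R] [CommRing K]
    [Algebra R K] (A : Matrix ι ι R)
    (hR : Function.Injective (algebraMap R K)) (hA : IsUnit (A.map (algebraMap R K)).det) :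
    Nonempty (Module.DirectLimit (fun _ : ℕ => ι → R) (fun i j _ => A.mulVecLin ^ (j - i)) ≃ₗ[R]
      span R {x : ι → K | ∃ (k : ℕ) (y : ι → R),
        (A.map (algebraMap R K) ^ k) *ᵥ x = fun i => algebraMap R K (y i)}) := by
  set T := ((A.map (algebraMap R K)).toLinearEquiv' (invertibleOfIsUnitDet _ hA)).restrictScalars R
  have hT : ∀ k x, (T ^ k) x = (A.map (algebraMap R K) ^ k) *ᵥ x := fun k x => by
    rw [LinearEquiv.pow_apply, pow_mulVec_eq_iterate]; rfl
  have hc : Semiconj ((Algebra.linearMap R K).compLeft ι) A.mulVecLin T := fun y => by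
    ext i; exact RingHom.map_mulVec (algebraMap R K) A y i
  have hS : {x | ∃ (k : ℕ) (y : ι → R), (T ^ k) x = (Algebra.linearMap R K).compLeft ι y} =
      {x | ∃ (k : ℕ) (y : ι → R),
        (A.map (algebraMap R K) ^ k) *ᵥ x = fun i => algebraMap R K (y i)} := by
    simp only [hT]; rfl
  rw [← hS]
  exact Module.DirectLimit.nonempty_linearEquiv_span_of_semiconj hc
    fun y z h => funext fun i => hR (congrFun h i)

end Matrix

/-- For an `n × n` integer matrix `A` with nonzero determinant, the direct limit of the
constant system `ℤⁿ →A→ ℤⁿ →A→ ⋯` is isomorphic to the subgroup `⋃ₖ A⁻ᵏℤⁿ` of `ℚⁿ`,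
where `A⁻ᵏℤⁿ = {x ∈ ℚⁿ ∣ Aᵏx ∈ ℤⁿ}`. -/
theorem directLimit_of_invertible_det
    (n : ℕ) (A : Matrix (Fin n) (Fin n) ℤ) (hA : A.det ≠ 0) :
    Nonempty
      ((Module.DirectLimit (fun _ : ℕ => Fin n → ℤ)
          (fun i j _ => (A.mulVecLin ^ (j - i) : (Fin n → ℤ) →ₗ[ℤ] (Fin n → ℤ))))
        ≃+
       (AddSubgroup.closure {x : Fin n → ℚ | ∃ (k : ℕ) (y : Fin n → ℤ),
          ((A.map (Int.cast : ℤ → ℚ)) ^ k).mulVec x = fun i => (y i : ℚ)})) := by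
  have hdet : IsUnit (A.map (algebraMap ℤ ℚ)).det := by
    rw [isUnit_iff_ne_zero, ← RingHom.mapMatrix_apply, ← RingHom.map_det]
    simpa using hA
  obtain ⟨e⟩ := Matrix.nonempty_directLimit_mulVecLin_linearEquiv A
    (algebraMap ℤ ℚ).injective_int hdet
  exact ⟨e.toAddEquiv.trans (AddEquiv.addSubgroupCongr (span_int_eq_addSubgroupClosure _))⟩
end

section
/- Let U be an n × n upper triangular integer matrix with nonzero diagonal entries λ_1, …, λ_n, and D = diag(λ_1, …, λ_n). If V_k := U^k D^{−k} is an integer matrix for all k ∈ ℕ, then the direct limit lim→(U, ℤ^n) is isomorphic to lim→(D, ℤ^n), which is isomorphic to ℤ[1/λ_1] ⊕ ⋯ ⊕ ℤ[1/λ_n]. -/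
/-- `ℤ[1/d] = ⋃ᵢ (1/dⁱ)ℤ`, the subgroup of ℚ generated by the powers `1/dⁱ`. -/
def Zinv (d : ℤ) : AddSubgroup ℚ :=
  AddSubgroup.closure {q : ℚ | ∃ i : ℕ, q = ((d : ℚ) ^ i)⁻¹}

/-!
Over ℚ, `Vₖ = UᵏD⁻ᵏ` satisfies `Vₖ₊₁ D = U Vₖ`, so the `Vₖ` intertwine the two constant direct
systems; as `U` is triangular, `det U = det D`, hence `det Vₖ = 1` and each `Vₖ` is an
automorphism of `ℤⁿ`, which makes `lim→(D, ℤⁿ) ≅ lim→(U, ℤⁿ)`. The diagonal system splits into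
coordinates, and `x` at stage `k` of the `i`-th coordinate is sent to `x / λᵢᵏ ∈ ℤ[1/λᵢ]`; this
is injective at every stage and reaches every `m / λᵢᵏ`, i.e. all of `ℤ[1/λᵢ]`.
-/

open Matrix

lemma inv_pow_mem_Zinv (d : ℤ) (k : ℕ) : ((d : ℚ) ^ k)⁻¹ ∈ Zinv d :=
  AddSubgroup.subset_closure ⟨k, rfl⟩

lemma mem_Zinv_iff {d : ℤ} (hd : d ≠ 0) {q : ℚ} :
    q ∈ Zinv d ↔ ∃ (k : ℕ) (m : ℤ), q = m * ((d : ℚ) ^ k)⁻¹ := by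
  have hdq : (d : ℚ) ≠ 0 := Int.cast_ne_zero.2 hd
  refine ⟨fun hq => ?_, ?_⟩
  · induction hq using AddSubgroup.closure_induction with
    | mem x hx => obtain ⟨k, rfl⟩ := hx; exact ⟨k, 1, by simp⟩
    | zero => exact ⟨0, 0, by simp⟩
    | add x y _ _ hx hy =>
      obtain ⟨k₁, m₁, rfl⟩ := hx
      obtain ⟨k₂, m₂, rfl⟩ := hy
      refine ⟨k₁ + k₂, m₁ * d ^ k₂ + m₂ * d ^ k₁, ?_⟩
      push_cast
      field_simp
      ring
    | neg x _ hx => obtain ⟨k, m, rfl⟩ := hx; exact ⟨k, -m, by push_cast; ring⟩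
  · rintro ⟨k, m, rfl⟩
    simpa [zsmul_eq_mul] using zsmul_mem (inv_pow_mem_Zinv d k) m

section PowerSystem

variable {R M N : Type*} [Semiring R] [AddCommMonoid M] [Module R M] [AddCommMonoid N]
  [Module R N] {f : M →ₗ[R] M} {g : N →ₗ[R] N}

lemma comp_pow_sub_eq_pow_sub_comp (e : ℕ → M →ₗ[R] N) (he : ∀ k, e (k + 1) ∘ₗ f = g ∘ₗ e k)
    {i j : ℕ} (hij : i ≤ j) : e j ∘ₗ f ^ (j - i) = (g ^ (j - i)) ∘ₗ e i := by
  obtain ⟨d, rfl⟩ := Nat.exists_eq_add_of_le hij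
  rw [Nat.add_sub_cancel_left]
  induction d with
  | zero => rfl
  | succ d ih =>
    rw [pow_succ', pow_succ', Module.End.mul_eq_comp, Module.End.mul_eq_comp,
      ← LinearMap.comp_assoc, ← add_assoc, he, LinearMap.comp_assoc, ih (Nat.le_add_right i d),
      LinearMap.comp_assoc]

noncomputable def powLimitCongr (e : ℕ → M ≃ₗ[R] N)
    (he : ∀ k, (e (k + 1)).toLinearMap ∘ₗ f = g ∘ₗ e k) :
    Module.DirectLimit (fun _ : ℕ => M) (fun i j _ => f ^ (j - i)) ≃ₗ[R]
      Module.DirectLimit (fun _ : ℕ => N) (fun i j _ => g ^ (j - i)) :=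
  Module.DirectLimit.congr e fun _ _ hij =>
    comp_pow_sub_eq_pow_sub_comp (fun k => (e k).toLinearMap) he hij

end PowerSystem

section Intertwining

variable {n : Type*} [Fintype n] [DecidableEq n]

noncomputable def Matrix.powLimitEquivOfMulEq {R : Type*} [CommRing R] {A B : Matrix n n R}
    (V : ℕ → Matrix n n R) (hV : ∀ k, IsUnit (V k).det) (hVAB : ∀ k, V (k + 1) * B = A * V k) :
    Module.DirectLimit (fun _ : ℕ => n → R) (fun i j _ => B.mulVecLin ^ (j - i)) ≃ₗ[R]
      Module.DirectLimit (fun _ : ℕ => n → R) (fun i j _ => A.mulVecLin ^ (j - i)) :=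
  powLimitCongr (fun k => (V k).toLinearEquiv (Pi.basisFun R n) (hV k)) fun k =>
    LinearMap.ext fun x => by
      simp only [LinearMap.comp_apply, LinearEquiv.coe_coe, Matrix.toLinearEquiv_apply,
        Matrix.toLin_eq_toLin', Matrix.toLin'_apply, Matrix.mulVecLin_apply, Matrix.mulVec_mulVec,
        hVAB]

variable {A B : Matrix n n ℤ} {V : ℕ → Matrix n n ℤ}
  (hV : ∀ k, (V k).map (Int.cast : ℤ → ℚ) = A.map Int.cast ^ k * (B.map Int.cast)⁻¹ ^ k)
include hV

lemma mul_eq_mul_of_map_eq_pow_mul_inv_pow (hB : B.det ≠ 0) (k : ℕ) :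
    V (k + 1) * B = A * V k := by
  have hBq : IsUnit (B.map (Int.cast : ℤ → ℚ)).det := by
    rw [← Int.cast_det (R := ℚ)]; exact isUnit_iff_ne_zero.2 (Int.cast_ne_zero.2 hB)
  have map_mul (X Y : Matrix n n ℤ) :
      (X * Y).map (Int.cast : ℤ → ℚ) = X.map Int.cast * Y.map Int.cast :=
    Matrix.map_mul (f := Int.castRingHom ℚ)
  apply Matrix.map_injective (Int.cast_injective (α := ℚ))
  beta_reduce
  rw [map_mul, map_mul, hV, hV, pow_succ', pow_succ]
  simp only [mul_assoc, nonsing_inv_mul _ hBq, mul_one]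

lemma det_eq_one_of_map_eq_pow_mul_inv_pow (hAB : A.det = B.det) (hB : B.det ≠ 0) (k : ℕ) :
    (V k).det = 1 := by
  have hBq : ((B.det : ℤ) : ℚ) ≠ 0 := Int.cast_ne_zero.2 hB
  have : ((V k).det : ℚ) = 1 := by
    rw [Int.cast_det, hV, det_mul, det_pow, det_pow, det_nonsing_inv, ← Int.cast_det,
      ← Int.cast_det, hAB, Ring.inverse_eq_inv', ← mul_pow, mul_inv_cancel₀ hBq, one_pow]
  exact_mod_cast this

end Intertwining

section DiagonalLimit

variable {ι : Type*} {d : ι → ℤ}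

lemma diagonal_mulVecLin_pow_apply [Fintype ι] [DecidableEq ι] {R : Type*} [CommSemiring R]
    (d : ι → R) (m : ℕ) (x : ι → R) (i : ι) :
    ((diagonal d).mulVecLin ^ m) x i = d i ^ m * x i := by
  rw [← Matrix.toLin'_apply', ← Matrix.toLin'_pow, diagonal_pow, Matrix.toLin'_apply,
    mulVec_diagonal, Pi.pow_apply]

def toZinvPi (d : ι → ℤ) (k : ℕ) : (ι → ℤ) →ₗ[ℤ] ∀ i, Zinv (d i) :=
  LinearMap.pi fun i =>
    (zmultiplesHom (Zinv (d i)) ⟨_, inv_pow_mem_Zinv (d i) k⟩).toIntLinearMap ∘ₗ LinearMap.proj i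

@[simp]
lemma coe_toZinvPi_apply (d : ι → ℤ) (k : ℕ) (x : ι → ℤ) (i : ι) :
    (toZinvPi d k x i : ℚ) = x i * ((d i : ℚ) ^ k)⁻¹ := by
  simp [toZinvPi, zsmul_eq_mul]

lemma toZinvPi_injective (hd : ∀ i, d i ≠ 0) (k : ℕ) : Function.Injective (toZinvPi d k) := by
  intro x y hxy
  funext a
  have hda : ((d a : ℚ) ^ k)⁻¹ ≠ 0 := inv_ne_zero (pow_ne_zero k (Int.cast_ne_zero.2 (hd a)))
  have := congrArg (fun z => (z a : ℚ)) hxy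
  simp only [coe_toZinvPi_apply] at this
  exact_mod_cast mul_right_cancel₀ hda this

lemma exists_toZinvPi_eq [Fintype ι] (hd : ∀ i, d i ≠ 0) (y : ∀ i, Zinv (d i)) :
    ∃ k x, toZinvPi d k x = y := by
  choose k m hm using fun a => (mem_Zinv_iff (hd a)).1 (y a).2
  refine ⟨Finset.univ.sup k, fun a => m a * d a ^ (Finset.univ.sup k - k a), ?_⟩
  ext a
  have hda : (d a : ℚ) ≠ 0 := Int.cast_ne_zero.2 (hd a)
  obtain ⟨l, hl⟩ := Nat.exists_eq_add_of_le (Finset.le_sup (f := k) (Finset.mem_univ a))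
  rw [coe_toZinvPi_apply, hm, hl, Nat.add_sub_cancel_left]
  push_cast
  field_simp
  ring

variable [Fintype ι] [DecidableEq ι]

lemma toZinvPi_diagonal_pow (hd : ∀ i, d i ≠ 0) {i j : ℕ} (hij : i ≤ j) (x : ι → ℤ) :
    toZinvPi d j (((diagonal d).mulVecLin ^ (j - i)) x) = toZinvPi d i x := by
  obtain ⟨l, rfl⟩ := Nat.exists_eq_add_of_le hij
  ext a
  have hda : (d a : ℚ) ≠ 0 := Int.cast_ne_zero.2 (hd a)
  rw [coe_toZinvPi_apply, coe_toZinvPi_apply, diagonal_mulVecLin_pow_apply,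
    Nat.add_sub_cancel_left]
  push_cast
  field_simp
  ring

noncomputable def diagonalLimitEquivPiZinv (hd : ∀ i, d i ≠ 0) :
    Module.DirectLimit (fun _ : ℕ => ι → ℤ) (fun i j _ => (diagonal d).mulVecLin ^ (j - i))
      ≃ₗ[ℤ] ∀ i, Zinv (d i) :=
  LinearEquiv.ofBijective
    (Module.DirectLimit.lift ℤ ℕ _ _ (toZinvPi d) fun _ _ hij x => toZinvPi_diagonal_pow hd hij x)
    ⟨Module.DirectLimit.lift_injective _ _ (toZinvPi_injective hd), fun y => by
      obtain ⟨k, x, rfl⟩ := exists_toZinvPi_eq hd y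
      exact ⟨Module.DirectLimit.of ℤ ℕ _ _ k x, Module.DirectLimit.lift_of _ _ _⟩⟩

end DiagonalLimit

/-- If `U` is upper triangular over ℤ with nonzero diagonal `λ₁,…,λₙ`, `D = diag(λ₁,…,λₙ)`,
and each `Vₖ = UᵏD⁻ᵏ` has integer entries, then `lim→(U,ℤⁿ) ≅ lim→(D,ℤⁿ) ≅ ⊕ᵢ ℤ[1/λᵢ]`. -/
theorem directLimit_upper_triangular
    (n : ℕ) (U : Matrix (Fin n) (Fin n) ℤ)
    (hUt : ∀ i j : Fin n, j < i → U i j = 0)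
    (hdiag : ∀ i : Fin n, U i i ≠ 0)
    (V : ℕ → Matrix (Fin n) (Fin n) ℤ)
    (hV : ∀ k : ℕ, (V k).map (Int.cast : ℤ → ℚ) =
      (U.map (Int.cast : ℤ → ℚ)) ^ k *
        ((Matrix.diagonal fun i => ((U i i : ℚ)))⁻¹) ^ k) :
    Nonempty
      ((Module.DirectLimit (fun _ : ℕ => Fin n → ℤ)
          (fun i j _ => (U.mulVecLin ^ (j - i) : (Fin n → ℤ) →ₗ[ℤ] (Fin n → ℤ))))
        ≃+
       (Module.DirectLimit (fun _ : ℕ => Fin n → ℤ)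
          (fun i j _ => ((Matrix.diagonal fun i => U i i).mulVecLin ^ (j - i) :
            (Fin n → ℤ) →ₗ[ℤ] (Fin n → ℤ))))) ∧
    Nonempty
      ((Module.DirectLimit (fun _ : ℕ => Fin n → ℤ)
          (fun i j _ => ((Matrix.diagonal fun i => U i i).mulVecLin ^ (j - i) :
            (Fin n → ℤ) →ₗ[ℤ] (Fin n → ℤ))))
        ≃+ (∀ i : Fin n, Zinv (U i i))) := by
  set D : Matrix (Fin n) (Fin n) ℤ := diagonal fun i => U i i
  have hD : D.det ≠ 0 := by
    rw [det_diagonal]; exact Finset.prod_ne_zero_iff.2 fun i _ => hdiag i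
  have hUD : U.det = D.det := by
    rw [det_of_isUpperTriangular fun i j h => hUt i j h, det_diagonal]
  have hV' : ∀ k, (V k).map (Int.cast : ℤ → ℚ) = U.map Int.cast ^ k * (D.map Int.cast)⁻¹ ^ k := by
    rwa [diagonal_map Int.cast_zero]
  have hVunit k : IsUnit (V k).det := by
    rw [det_eq_one_of_map_eq_pow_mul_inv_pow hV' hUD hD]; exact isUnit_one
  exact ⟨⟨(powLimitEquivOfMulEq V hVunit (mul_eq_mul_of_map_eq_pow_mul_inv_pow hV' hD)).symm
    |>.toAddEquiv⟩, ⟨(diagonalLimitEquivPiZinv hdiag).toAddEquiv⟩⟩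
end

section
/- For the 5 × 5 integer matrix A with rows (2,2,2,1,1), (0,1,0,0,0), (1,2,3,1,1), (1,2,2,2,1), (1,2,2,1,2), the direct limit of the system ℤ⁵ → ℤ⁵ → ⋯ with all maps equal to A is isomorphic to ℤ[1/6] ⊕ ℤ⁴. -/
/-!
In the coordinates `t = x₀`, `y = (x₁, x₂ - x₀, x₃ - x₀, x₄ - x₀)` of `ℤ⁵` (the kernel of `y` is
spanned by the eigenvector `(1, 0, 1, 1, 1)`), `A` acts by `(t, y) ↦ (6t + λ y, y)` with
`λ y = 2y₀ + 2y₁ + y₂ + y₃`. Since `1 + 6 + ⋯ + 6ⁿ = 6 (1 + ⋯ + 6ⁿ⁻¹) + 1`, the maps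
`(t, y) ↦ ((t - (1 + 6 + ⋯ + 6ⁿ⁻¹) λ y) / 6ⁿ, y)` from the `n`-th copy of `ℤ⁵` to `ℤ[1/6] × ℤ⁴`
are compatible with `A`. Each of them is injective and together they cover `ℤ[1/6] × ℤ⁴`, so they
identify the direct limit with `ℤ[1/6] × ℤ⁴`.
-/

open Finset

section ConstantSystem

variable {R M P : Type*} [Ring R] [AddCommGroup M] [Module R M] [AddCommGroup P] [Module R P]
  {T : Module.End R M} {g : ℕ → M →ₗ[R] P}

theorem apply_pow_sub_of_apply_succ (hg : ∀ n x, g (n + 1) (T x) = g n x)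
    (i j : ℕ) (hij : i ≤ j) (x : M) : g j ((T ^ (j - i)) x) = g i x := by
  obtain ⟨k, rfl⟩ := Nat.exists_eq_add_of_le hij
  rw [Nat.add_sub_cancel_left]
  induction k with
  | zero => simp
  | succ k ih => rw [pow_succ', Module.End.mul_apply, ← add_assoc, hg, ih (by omega)]

variable (T g) in
noncomputable def Module.DirectLimit.powEquivOfCone (hg : ∀ n x, g (n + 1) (T x) = g n x)
    (hinj : ∀ n, Function.Injective (g n)) (hsurj : ∀ p, ∃ n x, g n x = p) :
    Module.DirectLimit (fun _ : ℕ => M) (fun i j _ => T ^ (j - i)) ≃ₗ[R] P :=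
  .ofBijective (Module.DirectLimit.lift R ℕ _ _ g (apply_pow_sub_of_apply_succ hg))
    ⟨Module.DirectLimit.lift_injective _ _ hinj, fun p => by
      obtain ⟨n, x, rfl⟩ := hsurj p
      exact ⟨Module.DirectLimit.of R ℕ _ _ n x, Module.DirectLimit.lift_of ..⟩⟩

end ConstantSystem

namespace Zinv

variable {d : ℤ}

theorem inv_pow_mem (n : ℕ) : ((d : ℚ) ^ n)⁻¹ ∈ Zinv d :=
  AddSubgroup.subset_closure ⟨n, rfl⟩

theorem exists_eq_intCast_div_pow (hd : d ≠ 0) {q : ℚ} (hq : q ∈ Zinv d) :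
    ∃ (z : ℤ) (n : ℕ), q = z / (d : ℚ) ^ n := by
  induction hq using AddSubgroup.closure_induction with
  | mem q hq =>
    obtain ⟨n, rfl⟩ := hq
    exact ⟨1, n, by simp⟩
  | zero => exact ⟨0, 0, by simp⟩
  | add q r _ _ hq hr =>
    obtain ⟨z, n, rfl⟩ := hq
    obtain ⟨w, m, rfl⟩ := hr
    refine ⟨z * d ^ m + w * d ^ n, n + m, ?_⟩
    have : (d : ℚ) ≠ 0 := by exact_mod_cast hd
    push_cast
    field_simp
    ring
  | neg q _ hq =>
    obtain ⟨z, n, rfl⟩ := hq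
    exact ⟨-z, n, by push_cast; ring⟩

variable (d) in
noncomputable def divPow (n : ℕ) : ℤ →ₗ[ℤ] Zinv d :=
  LinearMap.toSpanSingleton ℤ _ ⟨_, inv_pow_mem n⟩

@[simp]
theorem coe_divPow (n : ℕ) (z : ℤ) : (divPow d n z : ℚ) = z / (d : ℚ) ^ n := by
  simp [divPow, div_eq_mul_inv]

end Zinv

section Shear

variable {N : Type*} [AddCommGroup N] {d : ℤ} (l : N →ₗ[ℤ] ℤ)

variable (d) in
noncomputable def shearCone (n : ℕ) : ℤ × N →ₗ[ℤ] Zinv d × N :=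
  (Zinv.divPow d n ∘ₗ
      (LinearMap.fst ℤ ℤ N - (∑ i ∈ range n, d ^ i) • l ∘ₗ LinearMap.snd ℤ ℤ N)).prod
    (LinearMap.snd ℤ ℤ N)

@[simp]
theorem coe_shearCone_fst (n : ℕ) (v : ℤ × N) :
    ((shearCone d l n v).1 : ℚ) = (v.1 - (∑ i ∈ range n, d ^ i) * l v.2 : ℤ) / (d : ℚ) ^ n := by
  simp [shearCone, sub_div]

@[simp]
theorem shearCone_snd (n : ℕ) (v : ℤ × N) : (shearCone d l n v).2 = v.2 := rfl

variable {l}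

theorem shearCone_succ_apply (hd : d ≠ 0) (n : ℕ) (v : ℤ × N) :
    shearCone d l (n + 1) (d * v.1 + l v.2, v.2) = shearCone d l n v := by
  refine Prod.ext (Subtype.ext ?_) rfl
  have : (d : ℚ) ≠ 0 := by exact_mod_cast hd
  simp only [coe_shearCone_fst, geom_sum_succ, pow_succ]
  push_cast
  field_simp
  ring

theorem shearCone_injective (hd : d ≠ 0) (n : ℕ) : Function.Injective (shearCone d l n) := by
  rw [← LinearMap.ker_eq_bot, LinearMap.ker_eq_bot']
  rintro ⟨t, y⟩ hv
  obtain rfl : y = 0 := congr_arg Prod.snd hv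
  have ht := congr_arg (fun p => (p.1 : ℚ)) hv
  simp only [coe_shearCone_fst, map_zero, mul_zero, sub_zero] at ht
  simpa [hd] using ht

theorem exists_shearCone_eq (hd : d ≠ 0) (p : Zinv d × N) : ∃ n v, shearCone d l n v = p := by
  obtain ⟨⟨q, hq⟩, y⟩ := p
  obtain ⟨z, n, rfl⟩ := Zinv.exists_eq_intCast_div_pow hd hq
  refine ⟨n, (z + (∑ i ∈ range n, d ^ i) * l y, y), Prod.ext (Subtype.ext ?_) rfl⟩
  simp

end Shear

noncomputable def directLimitPowEquivZinvProd {M N : Type*} [AddCommGroup M] [AddCommGroup N]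
    (d : ℤ) (hd : d ≠ 0) (T : Module.End ℤ M) (e : M ≃ₗ[ℤ] ℤ × N) (l : N →ₗ[ℤ] ℤ)
    (he : ∀ x, e (T x) = (d * (e x).1 + l (e x).2, (e x).2)) :
    Module.DirectLimit (fun _ : ℕ => M) (fun i j _ => T ^ (j - i)) ≃ₗ[ℤ] Zinv d × N :=
  Module.DirectLimit.powEquivOfCone T (fun n => shearCone d l n ∘ₗ e.toLinearMap)
    (fun n x => by simp [he, shearCone_succ_apply hd])
    (fun n => (shearCone_injective hd n).comp e.injective)
    (fun p => by
      obtain ⟨n, v, rfl⟩ := exists_shearCone_eq (l := l) hd p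
      exact ⟨n, e.symm v, by simp⟩)

namespace SixMatrix

def A : Matrix (Fin 5) (Fin 5) ℤ :=
  !![2, 2, 2, 1, 1;
     0, 1, 0, 0, 0;
     1, 2, 3, 1, 1;
     1, 2, 2, 2, 1;
     1, 2, 2, 1, 2]

def coords : (Fin 5 → ℤ) ≃ₗ[ℤ] ℤ × (Fin 4 → ℤ) where
  toFun x := (x 0, ![x 1, x 2 - x 0, x 3 - x 0, x 4 - x 0])
  invFun v := ![v.1, v.2 0, v.2 1 + v.1, v.2 2 + v.1, v.2 3 + v.1]
  map_add' x y := by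
    ext i
    · rfl
    · fin_cases i <;> simp [add_sub_add_comm]
  map_smul' c x := by
    ext i
    · rfl
    · fin_cases i <;> simp [mul_sub]
  left_inv x := by
    ext i
    fin_cases i <;> simp
  right_inv v := by
    ext i
    · rfl
    · fin_cases i <;> simp

def drift : Module.Dual ℤ (Fin 4 → ℤ) :=
  dotProductEquiv ℤ (Fin 4) ![2, 2, 1, 1]

theorem coords_mulVec (x : Fin 5 → ℤ) :
    coords (A.mulVec x) = (6 * (coords x).1 + drift (coords x).2, (coords x).2) := by
  ext i
  · simp [coords, drift, A, dotProduct, Fin.sum_univ_five, Fin.sum_univ_four]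
    ring
  · fin_cases i <;> simp [coords, A, dotProduct, Fin.sum_univ_five] <;> ring

end SixMatrix

/-- The direct limit of the constant system `ℤ⁵ →A→ ℤ⁵ →A→ ⋯` for the explicit matrix `A`
is isomorphic to `ℤ[1/6] ⊕ ℤ⁴`. -/
theorem directLimit_explicit_matrix :
    let A : Matrix (Fin 5) (Fin 5) ℤ :=
      !![2, 2, 2, 1, 1;
         0, 1, 0, 0, 0;
         1, 2, 3, 1, 1;
         1, 2, 2, 2, 1;
         1, 2, 2, 1, 2]
    Nonempty
      ((Module.DirectLimit (fun _ : ℕ => Fin 5 → ℤ)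
          (fun i j _ => (A.mulVecLin ^ (j - i) : (Fin 5 → ℤ) →ₗ[ℤ] (Fin 5 → ℤ))))
        ≃+ (Zinv 6 × (Fin 4 → ℤ))) :=
  ⟨(directLimitPowEquivZinvProd 6 (by norm_num) SixMatrix.A.mulVecLin SixMatrix.coords
    SixMatrix.drift SixMatrix.coords_mulVec).toAddEquiv⟩
end
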